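/- Let M be a model category. If a morphism f : x → y between bifibrant objects (x, y both cofibrant and fibrant) becomes an isomorphism in the homotopy category Ho(M), then f is a weak equivalence in M. Consequently, the weak equivalences of M are exactly the maps inverted by the localization functor M → Ho(M) (M is saturated). -/

import Mathlib

open CategoryTheory CategoryTheory.Limits

universe v u

/-- A class of morphisms is closed under retracts. -/
def RetractClosed {M : Type u} [Category.{v} M] (P : MorphismProperty M) : Prop :=
  ∀ ⦃a b c d : M⦄ (f : a ⟶ b) (g : c ⟶ d) (ia : a ⟶ c) (ra : c ⟶ a) (ib : b ⟶ d) (rb : d ⟶ b),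
    ia ≫ ra = 𝟙 a → ib ≫ rb = 𝟙 b → ia ≫ g = f ≫ ib → ra ≫ f = g ≫ rb → P g → P f

/-- A (Quillen) model structure on a finitely bicomplete category `M`. -/
class ModelCategory (M : Type u) [Category.{v} M] [HasFiniteLimits M] [HasFiniteColimits M] :
    Type (max u v) where
  W : MorphismProperty M
  Cof : MorphismProperty M
  Fib : MorphismProperty M
  w_id : ∀ x : M, W (𝟙 x)
  w_comp : ∀ {x y z : M} (f : x ⟶ y) (g : y ⟶ z), W f → W g → W (f ≫ g)
  w_cancel_left : ∀ {x y z : M} (f : x ⟶ y) (g : y ⟶ z), W f → W (f ≫ g) → W g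
  w_cancel_right : ∀ {x y z : M} (f : x ⟶ y) (g : y ⟶ z), W g → W (f ≫ g) → W f
  w_retract : RetractClosed W
  cof_retract : RetractClosed Cof
  fib_retract : RetractClosed Fib
  lift_cof_triv : ∀ {a b x y : M} (i : a ⟶ b) (p : x ⟶ y),
    Cof i → W i → Fib p → HasLiftingProperty i p
  lift_triv_fib : ∀ {a b x y : M} (i : a ⟶ b) (p : x ⟶ y),
    Cof i → Fib p → W p → HasLiftingProperty i p
  factor_cw_f : ∀ {x y : M} (f : x ⟶ y), ∃ (z : M) (i : x ⟶ z) (p : z ⟶ y),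
    Cof i ∧ W i ∧ Fib p ∧ i ≫ p = f
  factor_c_wf : ∀ {x y : M} (f : x ⟶ y), ∃ (z : M) (i : x ⟶ z) (p : z ⟶ y),
    Cof i ∧ Fib p ∧ W p ∧ i ≫ p = f

namespace ModelCategory

variable {M : Type u} [Category.{v} M] [HasFiniteLimits M] [HasFiniteColimits M] [ModelCategory M]

/-- An object is cofibrant if the map from the initial object is a cofibration. -/
def Cofibrant (x : M) : Prop := Cof (M := M) (initial.to x)

/-- An object is fibrant if the map to the terminal object is a fibration. -/
def Fibrant (x : M) : Prop := Fib (M := M) (terminal.from x)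

end ModelCategory

open ModelCategory

/-! A map `f` inverted by the localization is first replaced, by cofibrant and fibrant
replacement and two-out-of-three, by a map from a cofibrant to a bifibrant object, and then factored
as a trivial cofibration followed by a fibration `p` between bifibrant objects. By the fundamental
lemma, maps in `Ho(M)` between bifibrant objects are homotopy classes of maps, so `p` has a
homotopy section, which the covering homotopy theorem straightens into a strict section `s`.
Then `p ≫ s` is homotopic to the identity, hence a weak equivalence, and `p` is a retract of it. -/

namespace HomotopicalAlgebra

lemma LeftHomotopyRel.weakEquivalence_iff {C : Type*} [Category* C]
    [CategoryWithWeakEquivalences C] [(weakEquivalences C).HasTwoOutOfThreeProperty]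
    [(weakEquivalences C).ContainsIdentities] {X Y : C} {f g : X ⟶ Y}
    (h : LeftHomotopyRel f g) : WeakEquivalence f ↔ WeakEquivalence g := by
  obtain ⟨P, ⟨h⟩⟩ := h
  exact h.weakEquivalence_iff

variable {C : Type*} [Category* C] [HomotopicalAlgebra.ModelCategory C]
  {H : Type*} [Category* H] (L : C ⥤ H) [L.IsLocalization (weakEquivalences C)]

instance {X Y : C} (f : X ⟶ Y) [WeakEquivalence f] : IsIso (L.map f) :=
  Localization.inverts L (weakEquivalences C) f (mem_weakEquivalences f)

lemma exists_section_of_fibration_of_isIso_map {Z Y : C} [IsCofibrant Y] [IsFibrant Y]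
    [IsFibrant Z] (p : Z ⟶ Y) [Fibration p] [IsIso (L.map p)] :
    ∃ s : Y ⟶ Z, s ≫ p = 𝟙 Y := by
  obtain ⟨s₀, hs₀⟩ := map_surjective_of_isLocalization L Y Z (inv (L.map p))
  have homotopic : LeftHomotopyRel (s₀ ≫ p) (𝟙 Y) := by
    rw [LeftHomotopyRel.iff_map_eq L, L.map_comp, hs₀, IsIso.inv_hom_id, L.map_id]
  obtain ⟨P, _, ⟨K⟩⟩ := homotopic.exists_good_cylinder
  obtain ⟨s, K', hK'⟩ := K.covering_homotopy p s₀
  exact ⟨s, by rw [← K'.h₁, Category.assoc, hK', K.h₁]⟩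

lemma weakEquivalence_of_fibration_of_isIso_map {Z Y : C} [IsCofibrant Z] [IsFibrant Z]
    [IsCofibrant Y] [IsFibrant Y] (p : Z ⟶ Y) [Fibration p] [IsIso (L.map p)] :
    WeakEquivalence p := by
  obtain ⟨s, hs⟩ := exists_section_of_fibration_of_isIso_map L p
  have hLs : L.map s = inv (L.map p) := by
    rw [← cancel_mono (L.map p), ← L.map_comp, hs, L.map_id, IsIso.inv_hom_id]
  have homotopic : LeftHomotopyRel (p ≫ s) (𝟙 Z) := by
    rw [LeftHomotopyRel.iff_map_eq L, L.map_comp, hLs, IsIso.hom_inv_id, L.map_id]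
  have : WeakEquivalence (p ≫ s) := homotopic.weakEquivalence_iff.2 inferInstance
  have retract : RetractArrow p (p ≫ s) :=
    { i := Arrow.homMk (𝟙 Z) s
      r := Arrow.homMk (𝟙 Z) p }
  rw [weakEquivalence_iff] at this ⊢
  exact (weakEquivalences C).of_retract retract this

lemma weakEquivalence_of_isIso_map_of_isCofibrant_of_bifibrant {X Y : C} [IsCofibrant X]
    [IsCofibrant Y] [IsFibrant Y] (f : X ⟶ Y) [IsIso (L.map f)] : WeakEquivalence f := by
  let h := MorphismProperty.factorizationData (trivialCofibrations C) (fibrations C) f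
  have : IsCofibrant h.Z := isCofibrant_of_cofibration h.i
  have : IsFibrant h.Z := isFibrant_of_fibration h.p
  have : IsIso (L.map h.p) := IsIso.of_isIso_fac_left (L.map_comp _ _ ▸ congrArg L.map h.fac)
  have := weakEquivalence_of_fibration_of_isIso_map L h.p
  rw [← h.fac]
  infer_instance

lemma weakEquivalence_iff_isIso_map {X Y : C} (f : X ⟶ Y) :
    WeakEquivalence f ↔ IsIso (L.map f) := by
  refine ⟨fun _ => inferInstance, fun _ => ?_⟩
  obtain ⟨X', _, q, _, _⟩ := CofibrantObject.HoCat.exists_resolution X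
  obtain ⟨Y', _, j, _, _⟩ := FibrantObject.HoCat.exists_resolution Y
  have : IsIso (L.map (q ≫ f ≫ j)) := by simp only [L.map_comp]; infer_instance
  let h := MorphismProperty.factorizationData (cofibrations C) (trivialFibrations C) (q ≫ f ≫ j)
  have : IsCofibrant h.Z := isCofibrant_of_cofibration h.i
  have : IsFibrant h.Z := isFibrant_of_fibration h.p
  have : IsIso (L.map h.i) := IsIso.of_isIso_fac_right (L.map_comp _ _ ▸ congrArg L.map h.fac)
  have := weakEquivalence_of_isIso_map_of_isCofibrant_of_bifibrant L h.i
  have : WeakEquivalence (q ≫ f ≫ j) := by rw [← h.fac]; infer_instance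
  rwa [weakEquivalence_precomp_iff, weakEquivalence_postcomp_iff] at this

end HomotopicalAlgebra

lemma RetractClosed.isStableUnderRetracts {M : Type u} [Category.{v} M] {P : MorphismProperty M}
    (hP : RetractClosed P) : P.IsStableUnderRetracts where
  of_retract h := hP _ _ _ _ _ _ h.retract_left h.retract_right h.i_w h.r_w

namespace ModelCategory

variable {M : Type u} [Category.{v} M] [HasFiniteLimits M] [HasFiniteColimits M] [ModelCategory M]

instance : HomotopicalAlgebra.ModelCategory M where
  categoryWithWeakEquivalences := ⟨W⟩
  categoryWithCofibrations := ⟨Cof⟩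
  categoryWithFibrations := ⟨Fib⟩
  cm2 :=
    { toIsStableUnderComposition := ⟨w_comp⟩
      of_postcomp := w_cancel_right
      of_precomp := w_cancel_left }
  cm3a := w_retract.isStableUnderRetracts
  cm3b := fib_retract.isStableUnderRetracts
  cm3c := cof_retract.isStableUnderRetracts
  cm4a i p hi hiw hp := lift_cof_triv i p hi.mem hiw.mem hp.mem
  cm4b i p hi hp hpw := lift_triv_fib i p hi.mem hp.mem hpw.mem
  cm5a := ⟨fun f => by
    obtain ⟨Z, i, p, hi, hiw, hp, fac⟩ := factor_cw_f f
    exact ⟨{ Z, i, p, fac, hi := ⟨hi, hiw⟩, hp }⟩⟩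
  cm5b := ⟨fun f => by
    obtain ⟨Z, i, p, hi, hp, hpw, fac⟩ := factor_c_wf f
    exact ⟨{ Z, i, p, fac, hi, hp := ⟨hp, hpw⟩ }⟩⟩

instance : (W (M := M)).Q.IsLocalization (HomotopicalAlgebra.weakEquivalences M) :=
  inferInstanceAs ((W (M := M)).Q.IsLocalization W)

end ModelCategory

/-- If a morphism between bifibrant objects of a model category becomes an
isomorphism in the homotopy category `Ho(M) = M[W⁻¹]`, then it is a weak equivalence.
Consequently, the weak equivalences are exactly the maps inverted by the localization functor
`M ⥤ Ho(M)`: a model category is saturated. -/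
theorem model_category_saturated
    {M : Type u} [Category.{v} M] [HasFiniteLimits M] [HasFiniteColimits M] [ModelCategory M] :
    (∀ (x y : M) (f : x ⟶ y), Cofibrant x → Fibrant x → Cofibrant y → Fibrant y →
      IsIso ((W (M := M)).Q.map f) → W (M := M) f) ∧
    (∀ (x y : M) (f : x ⟶ y), W (M := M) f ↔ IsIso ((W (M := M)).Q.map f)) := by
  have saturated (x y : M) (f : x ⟶ y) : W f ↔ IsIso ((W (M := M)).Q.map f) :=
    (HomotopicalAlgebra.weakEquivalence_iff f).symm.trans
      (HomotopicalAlgebra.weakEquivalence_iff_isIso_map (W (M := M)).Q f)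
  exact ⟨fun x y f _ _ _ _ => (saturated x y f).2, saturated⟩
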